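/- arXiv:1703.02943 — 5 statements merged into one kernel-verified Lean document; each statement's English description precedes it below -/
import Mathlib

section
/- Let S₁ and S₂ be Seidel matrices of order n. Then S₁ and S₂ are equivalent if and only if the associated two-colored graphs X(S₁) and X(S₂) are isomorphic as colored graphs (i.e., there is a color-preserving graph isomorphism between them). -/
open Matrix

/-- A Seidel matrix: a real symmetric matrix with zero diagonal and all off-diagonal
entries equal to `±1`. -/
def IsSeidel {m : Type*} (S : Matrix m m ℝ) : Prop :=
  S.IsSymm ∧ (∀ i, S i i = 0) ∧ ∀ i j, i ≠ j → S i j = 1 ∨ S i j = -1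

/-- A signed permutation matrix: exactly one nonzero entry, equal to `±1`, in each row and
in each column. -/
def IsSignedPerm {m : Type*} [Fintype m] [DecidableEq m] (P : Matrix m m ℝ) : Prop :=
  ∃ (σ : Equiv.Perm m) (ε : m → ℝ), (∀ i, ε i = 1 ∨ ε i = -1) ∧
    ∀ i j, P i j = if i = σ j then ε j else 0

/-- Equivalence of Seidel matrices: `S₂ = P S₁ Pᵀ` for some signed permutation matrix `P`. -/
def SeidelEquiv {m : Type*} [Fintype m] [DecidableEq m] (S₁ S₂ : Matrix m m ℝ) : Prop :=
  ∃ P : Matrix m m ℝ, IsSignedPerm P ∧ S₂ = P * S₁ * Pᵀ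

/-- The vertex set of the graph `X(S)`: the vertices `u_i` (left summand) together with the
vertices `v_i^(k)` (right summand). -/
abbrev XVertex (n : ℕ) := Fin n ⊕ Fin n × Fin 2

/-- The defining edge relation of `X(S)`: `u_i ∼ v_i^(k)` for all `i, k`;
`v_i^(k) ∼ v_j^(k)` when `S i j = 1`; and `v_i^(k) ∼ v_j^(1−k)` when `S i j = −1`. -/
def XRel {n : ℕ} (S : Matrix (Fin n) (Fin n) ℝ) : XVertex n → XVertex n → Prop
  | Sum.inl i, Sum.inr p => p.1 = i
  | Sum.inr p, Sum.inr q =>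
      (p.2 = q.2 ∧ S p.1 q.1 = 1) ∨ (p.2 ≠ q.2 ∧ S p.1 q.1 = -1)
  | _, _ => False

/-- The two-colored graph `X(S)` on `3n` vertices associated with a Seidel matrix `S`. -/
def XGraph {n : ℕ} (S : Matrix (Fin n) (Fin n) ℝ) : SimpleGraph (XVertex n) :=
  SimpleGraph.fromRel (XRel S)

/-- The coloring of the vertices of `X(S)`: the vertices `u_i` get color `0` and the
vertices `v_i^(k)` get color `1`. -/
def vertexColor {n : ℕ} : XVertex n → Fin 2
  | Sum.inl _ => 0
  | Sum.inr _ => 1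

lemma adj_inl_inl {n : ℕ} (S : Matrix (Fin n) (Fin n) ℝ) (i j : Fin n) :
    ¬ (XGraph S).Adj (Sum.inl i) (Sum.inl j) := by
  simp [XGraph, SimpleGraph.fromRel_adj, XRel]

lemma adj_inl_inr {n : ℕ} (S : Matrix (Fin n) (Fin n) ℝ) (i : Fin n) (p : Fin n × Fin 2) :
    (XGraph S).Adj (Sum.inl i) (Sum.inr p) ↔ p.1 = i := by
  simp [XGraph, SimpleGraph.fromRel_adj, XRel]

lemma adj_inr_inr {n : ℕ} {S : Matrix (Fin n) (Fin n) ℝ} (hS : IsSeidel S)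
    (p q : Fin n × Fin 2) :
    (XGraph S).Adj (Sum.inr p) (Sum.inr q) ↔
      S p.1 q.1 = (if p.2 = q.2 then 1 else -1) := by
  obtain ⟨hsym, hdiag, _⟩ := hS
  have hsymm : S q.1 p.1 = S p.1 q.1 := by
    conv_lhs => rw [← hsym]
    rfl
  constructor
  · rintro ⟨hne, h | h⟩ <;>
      rcases h with ⟨h1, h2⟩ | ⟨h1, h2⟩ <;>
      simp_all [eq_comm, XRel]
  · intro h
    have hne : p.1 ≠ q.1 := by
      intro he
      rw [he, hdiag] at h
      split at h <;> norm_num at h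
    refine ⟨by simp [Prod.ext_iff]; intro h'; exact fun h'' => hne (by simp_all), Or.inl ?_⟩
    by_cases hk : p.2 = q.2 <;> simp [hk] at h ⊢ <;> simp [XRel, hk, h]

lemma conj_apply {m : Type*} [Fintype m] [DecidableEq m] (S : Matrix m m ℝ)
    (σ : Equiv.Perm m) (ε : m → ℝ) (P : Matrix m m ℝ)
    (hP : ∀ i j, P i j = if i = σ j then ε j else 0) (i j : m) :
    (P * S * Pᵀ) (σ i) (σ j) = ε i * S i j * ε j := by
  simp only [Matrix.mul_apply, Matrix.transpose_apply, hP, σ.injective.eq_iff,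
    ite_mul, mul_ite, zero_mul, mul_zero, Finset.sum_ite_eq, Finset.sum_ite_eq',
    Finset.mem_univ, if_true]


lemma fin2_add_add (a b : Fin 2) : a + b + b = a := by omega

lemma fin2_eq_add_one (a b : Fin 2) : a = b + 1 ↔ ¬ a = b := by omega

lemma key_iff (a e1 e2 : ℝ) (k l d1 d2 : Fin 2)
    (h1 : e1 = 1 ∧ d1 = 0 ∨ e1 = -1 ∧ d1 = 1)
    (h2 : e2 = 1 ∧ d2 = 0 ∨ e2 = -1 ∧ d2 = 1) :
    (e1 * a * e2 = if k + d1 = l + d2 then 1 else -1) ↔ (a = if k = l then 1 else -1) := by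
  rcases h1 with ⟨he1, hd1⟩ | ⟨he1, hd1⟩ <;> rcases h2 with ⟨he2, hd2⟩ | ⟨he2, hd2⟩ <;>
    subst he1 <;> subst hd1 <;> subst he2 <;> subst hd2 <;>
    fin_cases k <;> fin_cases l <;>
    simp (config := { decide := true }) <;> constructor <;> intro h <;> linarith

lemma forward {n : ℕ} (S₁ S₂ : Matrix (Fin n) (Fin n) ℝ)
    (h₁ : IsSeidel S₁) (h₂ : IsSeidel S₂)
    (σ : Equiv.Perm (Fin n)) (ε : Fin n → ℝ) (hε : ∀ i, ε i = 1 ∨ ε i = -1)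
    (hkey : ∀ i j, S₂ (σ i) (σ j) = ε i * S₁ i j * ε j) :
    ∃ φ : XGraph S₁ ≃g XGraph S₂, ∀ v, vertexColor (φ v) = vertexColor v := by
  set δ : Fin n → Fin 2 := fun i => if ε i = 1 then 0 else 1 with hδ
  have hd : ∀ i, ε i = 1 ∧ δ i = 0 ∨ ε i = -1 ∧ δ i = 1 := by
    intro i
    rcases hε i with h | h
    · exact Or.inl ⟨h, by simp [hδ, h]⟩
    · refine Or.inr ⟨h, by simp [hδ, h]; norm_num⟩
  refine ⟨⟨⟨Sum.map σ (fun p => (σ p.1, p.2 + δ p.1)),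
      Sum.map σ.symm (fun p => (σ.symm p.1, p.2 + δ (σ.symm p.1))), ?_, ?_⟩, ?_⟩, ?_⟩
  · rintro (i | ⟨i, k⟩) <;> simp [fin2_add_add]
  · rintro (i | ⟨i, k⟩) <;> simp [fin2_add_add]
  · rintro (i | ⟨i, k⟩) (j | ⟨j, l⟩)
    · simp only [Equiv.coe_fn_mk, Sum.map_inl]
      exact iff_of_false (adj_inl_inl S₂ _ _) (adj_inl_inl S₁ _ _)
    · simp only [Equiv.coe_fn_mk, Sum.map_inl, Sum.map_inr, adj_inl_inr]
      exact σ.injective.eq_iff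
    · rw [(XGraph S₂).adj_comm, (XGraph S₁).adj_comm]
      simp only [Equiv.coe_fn_mk, Sum.map_inl, Sum.map_inr, adj_inl_inr]
      exact σ.injective.eq_iff
    · simp only [Equiv.coe_fn_mk, Sum.map_inr, adj_inr_inr h₂, adj_inr_inr h₁]
      rw [hkey i j]
      exact key_iff (S₁ i j) (ε i) (ε j) k l (δ i) (δ j) (hd i) (hd j)
  · rintro (i | ⟨i, k⟩) <;> rfl

lemma color_inl {n : ℕ} (v : XVertex n) (h : vertexColor v = 0) :
    ∃ j : Fin n, v = Sum.inl j := by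
  cases v with
  | inl j => exact ⟨j, rfl⟩
  | inr p => simp [vertexColor] at h

lemma color_inr {n : ℕ} (v : XVertex n) (h : vertexColor v = 1) :
    ∃ q : Fin n × Fin 2, v = Sum.inr q := by
  cases v with
  | inl j => simp [vertexColor] at h
  | inr p => exact ⟨p, rfl⟩

lemma backward {n : ℕ} (S₁ S₂ : Matrix (Fin n) (Fin n) ℝ)
    (h₁ : IsSeidel S₁) (h₂ : IsSeidel S₂)
    (φ : XGraph S₁ ≃g XGraph S₂) (hφc : ∀ v, vertexColor (φ v) = vertexColor v) :
    ∃ (σ : Equiv.Perm (Fin n)) (ε : Fin n → ℝ), (∀ i, ε i = 1 ∨ ε i = -1) ∧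
      ∀ i j, S₂ (σ i) (σ j) = ε i * S₁ i j * ε j := by
  have hc' : ∀ v, vertexColor (φ.symm v) = vertexColor v := by
    intro v
    rw [← hφc (φ.symm v)]
    simp
  choose f hf using fun i : Fin n => color_inl (φ (Sum.inl i)) (by rw [hφc]; rfl)
  choose g hg using fun p : Fin n × Fin 2 => color_inr (φ (Sum.inr p)) (by rw [hφc]; rfl)
  choose f' hf' using fun i : Fin n => color_inl (φ.symm (Sum.inl i)) (by rw [hc']; rfl)
  have hff' : ∀ i, f' (f i) = i := by
    intro i
    have h : (Sum.inl (f' (f i)) : XVertex n) = Sum.inl i := by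
      rw [← hf' (f i), ← hf i]
      exact φ.symm_apply_apply _
    exact Sum.inl.inj h
  have hf'f : ∀ i, f (f' i) = i := by
    intro i
    have h : (Sum.inl (f (f' i)) : XVertex n) = Sum.inl i := by
      rw [← hf (f' i), ← hf' i]
      exact φ.apply_symm_apply _
    exact Sum.inl.inj h
  set σ : Equiv.Perm (Fin n) := ⟨f, f', hff', hf'f⟩ with hσ
  have hginj : Function.Injective g := by
    intro p q h
    have h2 : φ (Sum.inr p) = φ (Sum.inr q) := by rw [hg, hg, h]
    exact Sum.inr.inj (φ.injective h2)
  have h_gf : ∀ p : Fin n × Fin 2, (g p).1 = f p.1 := by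
    intro p
    have hadj : (XGraph S₁).Adj (Sum.inl p.1) (Sum.inr p) := (adj_inl_inr S₁ _ _).mpr rfl
    have h2 := φ.map_rel_iff.mpr hadj
    rw [hf, hg] at h2
    exact (adj_inl_inr S₂ _ _).mp h2
  set δ : Fin n → Fin 2 := fun i => (g (i, 0)).2 with hδ
  have e2 : ∀ x : Fin 2, x = 0 ∨ x = 1 := by decide
  have hgδ : ∀ (i : Fin n) (k : Fin 2), (g (i, k)).2 = k + δ i := by
    intro i k
    rcases e2 k with rfl | rfl
    · rw [zero_add]
    · have hne : (g (i, 1)).2 ≠ (g (i, 0)).2 := by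
        intro h
        have h2 : g (i, 1) = g (i, 0) := Prod.ext (by rw [h_gf (i,1), h_gf (i,0)]) h
        have := hginj h2
        simp at this
      show (g (i, 1)).2 = 1 + (g (i, 0)).2
      omega
  set ε : Fin n → ℝ := fun i => if δ i = 0 then 1 else -1 with hε
  have hεpm : ∀ i, ε i = 1 ∨ ε i = -1 := by
    intro i
    by_cases h : δ i = 0 <;> simp [hε, h]
  have hee : ∀ i j, ε i * ε j = if δ i = δ j then 1 else -1 := by
    intro i j
    rcases e2 (δ i) with h1 | h1 <;> rcases e2 (δ j) with h2 | h2 <;>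
      simp [hε, h1, h2]
  have hkey : ∀ i j, S₂ (f i) (f j) = ε i * S₁ i j * ε j := by
    intro i j
    by_cases hij : i = j
    · subst hij
      rw [h₂.2.1, h₁.2.1]
      ring
    · have hfij : f i ≠ f j := fun h => hij (hff' i ▸ hff' j ▸ by rw [h])
      have hmain : (S₂ (f i) (f j) = if δ i = δ j then 1 else -1) ↔ S₁ i j = 1 := by
        have h0 : (XGraph S₂).Adj (Sum.inr (g (i, 0))) (Sum.inr (g (j, 0))) ↔
            (XGraph S₁).Adj (Sum.inr (i, (0 : Fin 2))) (Sum.inr (j, 0)) := by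
          rw [← hg, ← hg]
          exact φ.map_rel_iff
        rw [adj_inr_inr h₂, adj_inr_inr h₁] at h0
        simpa [h_gf (i, 0), h_gf (j, 0), hδ] using h0
      rcases h₁.2.2 i j hij with hs | hs
      · rw [hs, hmain.mpr hs, mul_one, ← hee]
      · have hne : S₂ (f i) (f j) ≠ (if δ i = δ j then 1 else -1) := by
          intro h
          have := hmain.mp h
          rw [hs] at this
          norm_num at this
        have hval : S₂ (f i) (f j) = -(if δ i = δ j then 1 else -1) := by
          rcases h₂.2.2 (f i) (f j) hfij with h2 | h2 <;> rw [h2] at hne ⊢ <;>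
            by_cases hd : δ i = δ j <;> simp [hd] at hne ⊢
        rw [hs, hval, ← hee]
        ring
  exact ⟨σ, ε, hεpm, fun i j => hkey i j⟩

/-- Two Seidel matrices `S₁, S₂` of order `n` are equivalent if and only if
the associated two-colored graphs `X(S₁)` and `X(S₂)` are isomorphic via a color-preserving
graph isomorphism. -/
theorem stmt_0 {n : ℕ} (S₁ S₂ : Matrix (Fin n) (Fin n) ℝ)
    (h₁ : IsSeidel S₁) (h₂ : IsSeidel S₂) :
    SeidelEquiv S₁ S₂ ↔
      ∃ φ : XGraph S₁ ≃g XGraph S₂, ∀ v, vertexColor (φ v) = vertexColor v := by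
  simp only [SeidelEquiv, IsSignedPerm]
  constructor
  · rintro ⟨P, ⟨σ, ε, hε, hP⟩, rfl⟩
    exact forward S₁ _ h₁ h₂ σ ε hε fun i j => conj_apply S₁ σ ε P hP i j
  · rintro ⟨φ, hφc⟩
    obtain ⟨σ, ε, hε, hkey⟩ := backward S₁ S₂ h₁ h₂ φ hφc
    refine ⟨Matrix.of fun a b => if a = σ b then ε b else 0, ⟨σ, ε, hε, fun i j => rfl⟩, ?_⟩
    ext a b
    obtain ⟨i, rfl⟩ := σ.surjective a
    obtain ⟨j, rfl⟩ := σ.surjective b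
    rw [conj_apply S₁ σ ε (Matrix.of fun a b => if a = σ b then ε b else 0) (fun i j => rfl) i j]
    exact hkey i j
end

section
/- Let S be a Seidel matrix of order n. Then the automorphism group Aut(S) of S is isomorphic, as a group, to the automorphism group Aut(X(S)) of the associated two-colored graph X(S) (automorphisms of X(S) being color-preserving graph automorphisms). -/
open Matrix

section lemmas

variable {m : Type*} [Fintype m] [DecidableEq m] {P Q : Matrix m m ℝ}

theorem IsSignedPerm.one : IsSignedPerm (1 : Matrix m m ℝ) :=
  ⟨1, fun _ => 1, fun _ => Or.inl rfl, fun i j => by simp [Matrix.one_apply]; split_ifs <;> simp_all⟩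

theorem IsSignedPerm.mul (hP : IsSignedPerm P) (hQ : IsSignedPerm Q) :
    IsSignedPerm (P * Q) := by
  obtain ⟨σ, ε, hε, hPe⟩ := hP
  obtain ⟨τ, δ, hδ, hQe⟩ := hQ
  refine ⟨σ * τ, fun j => ε (τ j) * δ j, fun j => ?_, fun i j => ?_⟩
  · rcases hε (τ j) with h | h <;> rcases hδ j with h' | h' <;> simp [h, h']
  · rw [Matrix.mul_apply, Finset.sum_eq_single (τ j)]
    · rw [hPe, hQe, if_pos rfl]
      simp [Equiv.Perm.mul_apply, ite_mul]
      split_ifs <;> simp_all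
    · intro k _ hk
      rw [hQe, if_neg hk, mul_zero]
    · intro h
      exact absurd (Finset.mem_univ _) h

theorem IsSignedPerm.transpose (hP : IsSignedPerm P) : IsSignedPerm Pᵀ := by
  obtain ⟨σ, ε, hε, hPe⟩ := hP
  refine ⟨σ⁻¹, fun i => ε (σ⁻¹ i), fun i => hε _, fun i j => ?_⟩
  rw [Matrix.transpose_apply, hPe]
  by_cases h : i = σ⁻¹ j
  · subst h
    simp
  · rw [if_neg, if_neg h]
    intro hj
    exact h (by rw [hj, Equiv.Perm.coe_inv, Equiv.symm_apply_apply])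

theorem IsSignedPerm.mul_transpose_self (hP : IsSignedPerm P) : P * Pᵀ = 1 := by
  obtain ⟨σ, ε, hε, hPe⟩ := hP
  ext i j
  rw [Matrix.mul_apply, Matrix.one_apply, Finset.sum_eq_single (σ⁻¹ i)]
  · rw [Matrix.transpose_apply, hPe, hPe]
    simp only [show σ (σ⁻¹ i) = i from σ.apply_symm_apply i, if_pos rfl]
    by_cases h : i = j
    · subst h
      rcases hε (σ⁻¹ i) with h' | h' <;> rw [Equiv.Perm.coe_inv] at h' <;> simp [h']
    · rw [if_neg fun hji => h ((hji : j = i)).symm, mul_zero, if_neg h]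
  · intro k _ hk
    rw [hPe, if_neg, zero_mul]
    intro hik
    exact hk (by rw [hik, Equiv.Perm.coe_inv, Equiv.symm_apply_apply])
  · intro h
    exact absurd (Finset.mem_univ _) h

end lemmas

/-- The automorphism group of a Seidel matrix `S`: the group of (invertible) signed
permutation matrices `P` with `P S Pᵀ = S`, as a subgroup of the units of the matrix ring. -/
def seidelAut {m : Type*} [Fintype m] [DecidableEq m] (S : Matrix m m ℝ) :
    Subgroup (Matrix m m ℝ)ˣ where
  carrier := {P | IsSignedPerm (P : Matrix m m ℝ) ∧
    (P : Matrix m m ℝ) * S * (P : Matrix m m ℝ)ᵀ = S}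
  one_mem' := ⟨by rw [Units.val_one]; exact IsSignedPerm.one, by simp⟩
  mul_mem' := by
    rintro P Q ⟨hP1, hP2⟩ ⟨hQ1, hQ2⟩
    refine ⟨by rw [Units.val_mul]; exact hP1.mul hQ1, ?_⟩
    rw [Units.val_mul, Matrix.transpose_mul]
    calc (P : Matrix m m ℝ) * (Q : Matrix m m ℝ) * S *
          ((Q : Matrix m m ℝ)ᵀ * (P : Matrix m m ℝ)ᵀ)
        = (P : Matrix m m ℝ) * ((Q : Matrix m m ℝ) * S * (Q : Matrix m m ℝ)ᵀ) *
          (P : Matrix m m ℝ)ᵀ := by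
          simp only [Matrix.mul_assoc]
      _ = S := by rw [hQ2, hP2]
  inv_mem' := by
    rintro P ⟨hP1, hP2⟩
    have h1 : (P : Matrix m m ℝ) * (P : Matrix m m ℝ)ᵀ = 1 := hP1.mul_transpose_self
    have hinv : ((P⁻¹ : (Matrix m m ℝ)ˣ) : Matrix m m ℝ) = (P : Matrix m m ℝ)ᵀ := by
      calc ((P⁻¹ : (Matrix m m ℝ)ˣ) : Matrix m m ℝ)
          = ((P⁻¹ : (Matrix m m ℝ)ˣ) : Matrix m m ℝ) *
            ((P : Matrix m m ℝ) * (P : Matrix m m ℝ)ᵀ) := by rw [h1, mul_one]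
        _ = (((P⁻¹ : (Matrix m m ℝ)ˣ) : Matrix m m ℝ) * (P : Matrix m m ℝ)) *
            (P : Matrix m m ℝ)ᵀ := by rw [mul_assoc]
        _ = (P : Matrix m m ℝ)ᵀ := by rw [Units.inv_mul, one_mul]
    have h2 : (P : Matrix m m ℝ)ᵀ * (P : Matrix m m ℝ) = 1 := by
      rw [← hinv]; exact Units.inv_mul P
    refine ⟨by rw [hinv]; exact hP1.transpose, ?_⟩
    rw [hinv, Matrix.transpose_transpose]
    calc (P : Matrix m m ℝ)ᵀ * S * (P : Matrix m m ℝ)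
        = (P : Matrix m m ℝ)ᵀ *
          ((P : Matrix m m ℝ) * S * (P : Matrix m m ℝ)ᵀ) * (P : Matrix m m ℝ) := by
          rw [hP2]
      _ = ((P : Matrix m m ℝ)ᵀ * (P : Matrix m m ℝ)) * S *
          ((P : Matrix m m ℝ)ᵀ * (P : Matrix m m ℝ)) := by
          simp only [Matrix.mul_assoc]
      _ = S := by rw [h2, one_mul, mul_one]

/-- The automorphism group of the two-colored graph `X(S)`: color-preserving graph
automorphisms, as a subgroup of the permutations of the vertex set. -/
def colorAut {n : ℕ} (S : Matrix (Fin n) (Fin n) ℝ) :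
    Subgroup (Equiv.Perm (XVertex n)) where
  carrier := {φ | (∀ a b, (XGraph S).Adj (φ a) (φ b) ↔ (XGraph S).Adj a b) ∧
    ∀ v, vertexColor (φ v) = vertexColor v}
  one_mem' := ⟨fun a b => by simp, fun v => by simp⟩
  mul_mem' := by
    rintro φ ψ ⟨hφ1, hφ2⟩ ⟨hψ1, hψ2⟩
    refine ⟨fun a b => ?_, fun v => ?_⟩
    · rw [Equiv.Perm.mul_apply, Equiv.Perm.mul_apply, hφ1, hψ1]
    · rw [Equiv.Perm.mul_apply, hφ2, hψ2]
  inv_mem' := by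
    rintro φ ⟨hφ1, hφ2⟩
    refine ⟨fun a b => ?_, fun v => ?_⟩
    · have := hφ1 (φ⁻¹ a) (φ⁻¹ b)
      simpa [Equiv.apply_symm_apply] using this.symm
    · have := hφ2 (φ⁻¹ v)
      simpa [Equiv.apply_symm_apply] using this.symm

/-!
A colour-preserving automorphism of `X(S)` permutes the vertices `u_i` by some `τ`; since the
only `u`-neighbour of `v_i^(k)` is `u_i`, it must send `v_i^(k)` to `v_{τ i}^(k + d_i)` for some
`d : Fin n → Fin 2`. As `v_i^(k) ∼ v_j^(l)` exactly when `S i j = (-1)^(k + l)`, such a map is an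
automorphism iff `S (τ i) (τ j) = (-1)^(d_i + d_j) S i j`, which is the condition `P S Pᵀ = S`
for the signed permutation matrix `P` with `P e_j = (-1)^(d_j) e_{τ j}`. So both groups are the
group of such pairs `(τ, d)`, and `(τ, d) ↦ P` is compatible with composition.
-/

namespace Seidel

open Equiv

def sign (k : Fin 2) : ℝ := if k = 0 then 1 else -1

lemma sign_add (k l : Fin 2) : sign (k + l) = sign k * sign l := by
  fin_cases k <;> fin_cases l <;> norm_num [sign, show (1 + 1 : Fin 2) = 0 from rfl]

lemma sign_add_eq_ite (k l : Fin 2) : sign (k + l) = if k = l then 1 else -1 := by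
  fin_cases k <;> fin_cases l <;> norm_num [sign, show (1 + 1 : Fin 2) = 0 from rfl]

lemma sign_ne_zero (k : Fin 2) : sign k ≠ 0 := by
  fin_cases k <;> norm_num [sign]

lemma sign_injective : Function.Injective sign := by
  intro k l
  fin_cases k <;> fin_cases l <;> norm_num [sign]

lemma sign_eq_one_or_neg_one (k : Fin 2) : sign k = 1 ∨ sign k = -1 := by
  fin_cases k <;> norm_num [sign]

lemma exists_sign_eq {x : ℝ} (hx : x = 1 ∨ x = -1) : ∃ k, sign k = x := by
  rcases hx with rfl | rfl
  exacts [⟨0, rfl⟩, ⟨1, rfl⟩]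

section SignedPermMatrix

variable {m : Type*} [DecidableEq m]

def signedPermMatrix (τ : Perm m) (d : m → Fin 2) : Matrix m m ℝ :=
  Matrix.of fun i j => if i = τ j then sign (d j) else 0

lemma signedPermMatrix_inj {τ υ : Perm m} {d e : m → Fin 2} :
    signedPermMatrix τ d = signedPermMatrix υ e ↔ τ = υ ∧ d = e := by
  refine ⟨fun h => ?_, fun ⟨hτ, hd⟩ => hτ ▸ hd ▸ rfl⟩
  have hentry (j : m) : sign (d j) = if τ j = υ j then sign (e j) else 0 := by
    simpa [signedPermMatrix] using congrFun (congrFun h (τ j)) j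
  have hτ (j : m) : τ j = υ j := by
    by_contra hne
    exact sign_ne_zero _ (by simpa [hne] using hentry j)
  exact ⟨Equiv.ext hτ, funext fun j => sign_injective (by simpa [hτ j] using hentry j)⟩

variable [Fintype m]

lemma isSignedPerm_signedPermMatrix (τ : Perm m) (d : m → Fin 2) :
    IsSignedPerm (signedPermMatrix τ d) :=
  ⟨τ, fun j => sign (d j), fun j => sign_eq_one_or_neg_one (d j), fun _ _ => rfl⟩

lemma _root_.IsSignedPerm.exists_eq_signedPermMatrix {P : Matrix m m ℝ} (hP : IsSignedPerm P) :
    ∃ τ d, P = signedPermMatrix τ d := by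
  obtain ⟨τ, ε, hε, hP⟩ := hP
  choose d hd using fun j => exists_sign_eq (hε j)
  exact ⟨τ, d, Matrix.ext fun i j => by simp [hP, signedPermMatrix, hd]⟩

lemma signedPermMatrix_mul (τ υ : Perm m) (d e : m → Fin 2) :
    signedPermMatrix τ d * signedPermMatrix υ e =
      signedPermMatrix (τ * υ) (fun j => d (υ j) + e j) := by
  ext i j
  simp [signedPermMatrix, Matrix.mul_apply, sign_add, ite_mul, mul_ite]

lemma signedPermMatrix_conj_apply (S : Matrix m m ℝ) (τ : Perm m) (d : m → Fin 2) (a b : m) :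
    (signedPermMatrix τ d * S * (signedPermMatrix τ d)ᵀ) (τ a) (τ b) =
      sign (d a) * sign (d b) * S a b := by
  simp only [signedPermMatrix, Matrix.mul_apply, Matrix.of_apply, Matrix.transpose_apply,
    EmbeddingLike.apply_eq_iff_eq, ite_mul, mul_ite, zero_mul, mul_zero, Finset.sum_ite_eq,
    Finset.mem_univ, if_true]
  ring

lemma signedPermMatrix_conj_eq_iff {S : Matrix m m ℝ} {τ : Perm m} {d : m → Fin 2} :
    signedPermMatrix τ d * S * (signedPermMatrix τ d)ᵀ = S ↔
      ∀ a b, S (τ a) (τ b) = sign (d a) * sign (d b) * S a b := by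
  refine ⟨fun h a b => ?_, fun h => ?_⟩
  · rw [← signedPermMatrix_conj_apply, h]
  · ext x y
    obtain ⟨a, rfl⟩ := τ.surjective x
    obtain ⟨b, rfl⟩ := τ.surjective y
    rw [signedPermMatrix_conj_apply, h]

end SignedPermMatrix

section Graph

variable {n : ℕ} {S : Matrix (Fin n) (Fin n) ℝ}

lemma not_adj_inl_inl (i j : Fin n) : ¬ (XGraph S).Adj (Sum.inl i) (Sum.inl j) := by
  simp [XGraph, XRel]

lemma adj_inl_inr (i : Fin n) (p : Fin n × Fin 2) :
    (XGraph S).Adj (Sum.inl i) (Sum.inr p) ↔ p.1 = i := by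
  simp [XGraph, XRel]

lemma adj_inr_inr (hS : IsSeidel S) (i j : Fin n) (k l : Fin 2) :
    (XGraph S).Adj (Sum.inr (i, k)) (Sum.inr (j, l)) ↔ S i j = sign (k + l) := by
  have hrel (i j : Fin n) (k l : Fin 2) :
      XRel S (Sum.inr (i, k)) (Sum.inr (j, l)) ↔ S i j = sign (k + l) := by
    rw [sign_add_eq_ite]
    by_cases hkl : k = l <;> simp [XRel, hkl]
  have hne (h : S i j = sign (k + l)) : i ≠ j := by
    rintro rfl
    exact sign_ne_zero _ (h ▸ hS.2.1 i)
  simp only [XGraph, SimpleGraph.fromRel_adj, hrel, hS.1.apply i j, add_comm l k, or_self]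
  exact ⟨And.right, fun h => ⟨fun hij => hne h (congrArg Prod.fst (Sum.inr_injective hij)), h⟩⟩

def xPerm (τ : Perm (Fin n)) (d : Fin n → Fin 2) : Perm (XVertex n) :=
  Equiv.sumCongr τ (Equiv.prodShear τ fun i => Equiv.addRight (d i))

@[simp]
lemma xPerm_inl (τ : Perm (Fin n)) (d : Fin n → Fin 2) (i : Fin n) :
    xPerm τ d (Sum.inl i) = Sum.inl (τ i) := rfl

@[simp]
lemma xPerm_inr (τ : Perm (Fin n)) (d : Fin n → Fin 2) (i : Fin n) (k : Fin 2) :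
    xPerm τ d (Sum.inr (i, k)) = Sum.inr (τ i, k + d i) := rfl

lemma xPerm_mul (τ υ : Perm (Fin n)) (d e : Fin n → Fin 2) :
    xPerm τ d * xPerm υ e = xPerm (τ * υ) (fun j => d (υ j) + e j) := by
  ext (i | ⟨i, k⟩) <;> simp [add_assoc, add_comm (e i)]

lemma xPerm_mem_colorAut_iff (hS : IsSeidel S) {τ : Perm (Fin n)} {d : Fin n → Fin 2} :
    xPerm τ d ∈ colorAut S ↔ ∀ a b, S (τ a) (τ b) = sign (d a) * sign (d b) * S a b := by
  have hcolor (v : XVertex n) : vertexColor (xPerm τ d v) = vertexColor v := by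
    rcases v with i | p <;> rfl
  have hinl (i : Fin n) (v : XVertex n) :
      (XGraph S).Adj (xPerm τ d (Sum.inl i)) (xPerm τ d v) ↔ (XGraph S).Adj (Sum.inl i) v := by
    rcases v with j | ⟨j, l⟩
    · simp [not_adj_inl_inl]
    · simp [adj_inl_inr]
  have hsign (i j : Fin n) (k l : Fin 2) :
      sign (k + d i + (l + d j)) = sign (d i) * sign (d j) * sign (k + l) := by
    simp only [sign_add]
    ring
  change (∀ a b, _) ∧ _ ↔ _
  simp only [hcolor, implies_true, and_true]
  constructor
  · intro h a b
    by_cases hab : a = b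
    · simp [hab, hS.2.1]
    obtain ⟨c, hc⟩ := exists_sign_eq (hS.2.2 a b hab)
    have hadj := h (Sum.inr (a, c)) (Sum.inr (b, 0))
    simp only [xPerm_inr, adj_inr_inr hS, add_zero, hc, iff_true] at hadj
    rw [hadj, hsign, add_zero, hc]
  · rintro h (i | ⟨i, k⟩) (j | ⟨j, l⟩)
    · exact hinl i _
    · exact hinl i _
    · rw [SimpleGraph.adj_comm, hinl, SimpleGraph.adj_comm]
    · rw [xPerm_inr, xPerm_inr, adj_inr_inr hS, adj_inr_inr hS, h, hsign,
        mul_right_inj' (mul_ne_zero (sign_ne_zero _) (sign_ne_zero _))]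

lemma exists_eq_inl_of_vertexColor_eq_zero {v : XVertex n} (h : vertexColor v = 0) :
    ∃ i, v = Sum.inl i := by
  rcases v with i | p
  · exact ⟨i, rfl⟩
  · simp [vertexColor] at h

lemma exists_eq_inr_of_vertexColor_eq_one {v : XVertex n} (h : vertexColor v = 1) :
    ∃ p, v = Sum.inr p := by
  rcases v with i | p
  · simp [vertexColor] at h
  · exact ⟨p, rfl⟩

lemma exists_xPerm_of_mem_colorAut {φ : Perm (XVertex n)} (hφ : φ ∈ colorAut S) :
    ∃ τ d, φ = xPerm τ d := by
  obtain ⟨hadj, hcolor⟩ := hφ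
  choose t ht using fun i => exists_eq_inl_of_vertexColor_eq_zero (hcolor (Sum.inl i))
  choose q hq using fun p => exists_eq_inr_of_vertexColor_eq_one (hcolor (Sum.inr p))
  have ht_inj : Function.Injective t := fun i j hij =>
    Sum.inl_injective (φ.injective (by rw [ht, ht, hij]))
  have hq_fst (i : Fin n) (k : Fin 2) : (q (i, k)).1 = t i := by
    have h := (hadj (Sum.inl i) (Sum.inr (i, k))).mpr ((adj_inl_inr i (i, k)).mpr rfl)
    rwa [ht, hq, adj_inl_inr] at h
  have hq_snd (i : Fin n) (k : Fin 2) : (q (i, k)).2 = k + (q (i, 0)).2 := by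
    have hne : (q (i, 1)).2 ≠ (q (i, 0)).2 := fun h => by
      have := φ.injective ((hq (i, 1)).trans ((congrArg Sum.inr (Prod.ext
        ((hq_fst i 1).trans (hq_fst i 0).symm) h)).trans (hq (i, 0)).symm))
      simp at this
    have fin_two (a b : Fin 2) : a ≠ b → a = 1 + b := by revert a b; decide
    fin_cases k
    · exact (zero_add _).symm
    · exact fin_two _ _ hne
  refine ⟨Equiv.ofBijective t (Finite.injective_iff_bijective.mp ht_inj),
    fun i => (q (i, 0)).2, Equiv.ext ?_⟩
  rintro (i | ⟨i, k⟩)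
  · exact ht i
  · rw [hq, xPerm_inr, ← hq_snd i k]
    exact congrArg Sum.inr (Prod.ext (hq_fst i k) rfl)

def signedUnitVector : XVertex n → Fin n → ℝ
  | Sum.inl _ => 0
  | Sum.inr (i, k) => Pi.single i (sign k)

def vertexPermMatrix (φ : Perm (XVertex n)) : Matrix (Fin n) (Fin n) ℝ :=
  Matrix.of fun i j => signedUnitVector (φ (Sum.inr (j, 0))) i

lemma vertexPermMatrix_one : vertexPermMatrix (1 : Perm (XVertex n)) = 1 := by
  ext i j
  simp [vertexPermMatrix, signedUnitVector, Matrix.one_apply, Pi.single_apply, sign]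

lemma vertexPermMatrix_xPerm (τ : Perm (Fin n)) (d : Fin n → Fin 2) :
    vertexPermMatrix (xPerm τ d) = signedPermMatrix τ d := by
  ext i j
  simp [vertexPermMatrix, signedUnitVector, signedPermMatrix, Pi.single_apply]

variable (S) in
def colorAutToMatrix : colorAut S →* Matrix (Fin n) (Fin n) ℝ where
  toFun φ := vertexPermMatrix φ
  map_one' := vertexPermMatrix_one
  map_mul' φ ψ := by
    obtain ⟨τ, d, hφ⟩ := exists_xPerm_of_mem_colorAut φ.2
    obtain ⟨υ, e, hψ⟩ := exists_xPerm_of_mem_colorAut ψ.2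
    simp only [Subgroup.coe_mul, hφ, hψ, xPerm_mul, vertexPermMatrix_xPerm,
      signedPermMatrix_mul]

def colorAutToSeidelAut (hS : IsSeidel S) : colorAut S →* seidelAut S :=
  (colorAutToMatrix S).toHomUnits.codRestrict (seidelAut S) fun φ => by
    obtain ⟨τ, d, hφ⟩ := exists_xPerm_of_mem_colorAut φ.2
    have hconj := (xPerm_mem_colorAut_iff hS).mp (hφ ▸ φ.2)
    change IsSignedPerm (vertexPermMatrix φ.1) ∧
      vertexPermMatrix φ.1 * S * (vertexPermMatrix φ.1)ᵀ = S
    rw [hφ, vertexPermMatrix_xPerm]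
    exact ⟨isSignedPerm_signedPermMatrix τ d, signedPermMatrix_conj_eq_iff.mpr hconj⟩

lemma colorAutToSeidelAut_injective (hS : IsSeidel S) :
    Function.Injective (colorAutToSeidelAut hS) := by
  intro φ ψ h
  have hmat : vertexPermMatrix φ.1 = vertexPermMatrix ψ.1 :=
    congrArg (fun P : seidelAut S => P.1.1) h
  obtain ⟨τ, d, hφ⟩ := exists_xPerm_of_mem_colorAut φ.2
  obtain ⟨υ, e, hψ⟩ := exists_xPerm_of_mem_colorAut ψ.2
  rw [hφ, hψ, vertexPermMatrix_xPerm, vertexPermMatrix_xPerm, signedPermMatrix_inj] at hmat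
  obtain ⟨rfl, rfl⟩ := hmat
  exact Subtype.ext (hφ.trans hψ.symm)

lemma colorAutToSeidelAut_surjective (hS : IsSeidel S) :
    Function.Surjective (colorAutToSeidelAut hS) := by
  rintro ⟨P, hP, hPS⟩
  obtain ⟨τ, d, hPτ⟩ := hP.exists_eq_signedPermMatrix
  rw [hPτ, signedPermMatrix_conj_eq_iff] at hPS
  refine ⟨⟨xPerm τ d, (xPerm_mem_colorAut_iff hS).mpr hPS⟩, Subtype.ext (Units.ext ?_)⟩
  exact (vertexPermMatrix_xPerm τ d).trans hPτ.symm

end Graph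

end Seidel

/-- For a Seidel matrix `S` of order `n`, the automorphism group `Aut S`
(the group of signed permutation matrices `P` with `P S Pᵀ = S`) is isomorphic, as a group,
to the automorphism group of the associated two-colored graph `X(S)` (the group of
color-preserving graph automorphisms of `X(S)`). -/
theorem stmt_1 {n : ℕ} (S : Matrix (Fin n) (Fin n) ℝ) (hS : IsSeidel S) :
    Nonempty (seidelAut S ≃* colorAut S) :=
  ⟨(MulEquiv.ofBijective (Seidel.colorAutToSeidelAut hS)
    ⟨Seidel.colorAutToSeidelAut_injective hS, Seidel.colorAutToSeidelAut_surjective hS⟩).symm⟩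
end

section
/- Let S be a Seidel matrix of order b ≥ 3 whose spectrum is {λ₀ with multiplicity b−c, λ₁ with multiplicity c} for some c ≥ 1, where λ₀ ≠ 1 and λ₁ ≠ 1. Then for every a ≥ 1 the matrix S′ := J_a ⊗ (S − I_b) + I_{ab} is a Seidel matrix of order ab whose spectrum is {a(λ₀−1)+1 with multiplicity b−c, 1 with multiplicity (a−1)b, a(λ₁−1)+1 with multiplicity c}. -/
open Polynomial

/-!
Write `J_a = 𝟙 𝟙ᵀ`. Then `J_a ⊗ M = (𝟙 ⊗ I_b) (𝟙ᵀ ⊗ M)`, while the product in the other order is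
`(𝟙ᵀ 𝟙) ⊗ M = a M`, so Sylvester's identity `χ(UV) = X^{ab - b} χ(VU)` gives
`χ(J_a ⊗ M) = X^{(a-1)b} χ(a M)`. With `M = S - I` and shifting by the identity, the eigenvalue `1`
appears with multiplicity `(a-1)b`, and the remaining eigenvalues are those of `a (S - I) + I`,
namely the images `a (λ - 1) + 1` of the eigenvalues `λ` of `S`.
-/

theorem Polynomial.X_sub_C_comp_C_inv_mul_X_sub_C {K : Type*} [Field K] {r : K} (hr : r ≠ 0)
    (μ s : K) : (X - C μ).comp (C r⁻¹ * (X - C s)) = C r⁻¹ * (X - C (r * μ + s)) := by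
  have hC : C r⁻¹ * C r = 1 := by rw [← C_mul, inv_mul_cancel₀ hr, C_1]
  simp only [sub_comp, X_comp, C_comp, C_add, C_mul]
  linear_combination C μ * hC

namespace Matrix

variable {ι n R : Type*} [Fintype n] [DecidableEq n]

theorem charpoly_add_one [CommRing R] (A : Matrix n n R) :
    (A + 1).charpoly = A.charpoly.comp (X - 1) := by
  simpa [sub_eq_add_neg] using charpoly_sub_scalar A (-1)

theorem charpoly_kronecker_of_const_one [CommRing R] [Fintype ι] [DecidableEq ι] [Nonempty ι]
    (M : Matrix n n R) :
    (kroneckerMap (· * ·) (of fun _ _ : ι => (1 : R)) M).charpoly =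
      X ^ ((Fintype.card ι - 1) * Fintype.card n) * ((Fintype.card ι : R) • M).charpoly := by
  have hfactor : kroneckerMap (· * ·) (of fun _ _ : ι => (1 : R)) M =
      kroneckerMap (· * ·) (replicateCol Unit (1 : ι → R)) (1 : Matrix n n R) *
        kroneckerMap (· * ·) (replicateRow Unit (1 : ι → R)) M := by
    rw [← mul_kronecker_mul, one_mul, ← vecMulVec_eq]
    congr 1
    ext
    simp [vecMulVec_apply]
  have hswap : kroneckerMap (· * ·) (replicateRow Unit (1 : ι → R)) M *
        kroneckerMap (· * ·) (replicateCol Unit (1 : ι → R)) (1 : Matrix n n R) =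
      reindex (Equiv.punitProd n).symm (Equiv.punitProd n).symm ((Fintype.card ι : R) • M) := by
    rw [← mul_kronecker_mul, mul_one]
    ext ⟨⟨⟩, i⟩ ⟨⟨⟩, j⟩
    simp [replicateRow_mul_replicateCol, dotProduct]
  rw [hfactor, charpoly_mul_comm_of_le, hswap, charpoly_reindex]
  · simp [Nat.sub_one_mul]
  · simp [Nat.le_mul_of_pos_left, Fintype.card_pos]

theorem charpoly_kronecker_of_const_one_add_one [CommRing R] [Fintype ι] [DecidableEq ι]
    [Nonempty ι] (M : Matrix n n R) :
    (kroneckerMap (· * ·) (of fun _ _ : ι => (1 : R)) M + 1).charpoly =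
      (X - 1) ^ ((Fintype.card ι - 1) * Fintype.card n) *
        ((Fintype.card ι : R) • M + 1).charpoly := by
  rw [charpoly_add_one, charpoly_add_one, charpoly_kronecker_of_const_one, mul_comp, pow_comp,
    X_comp]

section Field

variable {K : Type*} [Field K]

theorem charpoly_smul_add_scalar (M : Matrix n n K) {r : K} (hr : r ≠ 0) (s : K) :
    (r • M + scalar n s).charpoly =
      C (r ^ Fintype.card n) * M.charpoly.comp (C r⁻¹ * (X - C s)) := by
  have hcharmatrix : charmatrix (r • M + scalar n s) =
      C r • (scalar n (C r⁻¹ * (X - C s)) - M.map C) := by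
    refine Matrix.ext fun i j => ?_
    by_cases hij : i = j
    · subst hij
      have hC : C r * C r⁻¹ = 1 := by rw [← C_mul, mul_inv_cancel₀ hr, C_1]
      simp only [charmatrix_apply_eq, add_apply, smul_apply, scalar_apply, diagonal_apply_eq,
        sub_apply, map_apply, smul_eq_mul, map_add, C_mul]
      linear_combination (X - C s) * hC.symm
    · simp [hij]
  rw [charpoly, hcharmatrix, det_smul, ← eval_charpoly, charpoly_map, eval_map, ← map_pow]
  rfl

theorem charpoly_smul_add_scalar_of_charpoly_eq {M : Matrix n n K} {μ ν : K} {k l : ℕ}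
    (hM : M.charpoly = (X - C μ) ^ k * (X - C ν) ^ l) {r : K} (hr : r ≠ 0) (s : K) :
    (r • M + scalar n s).charpoly = (X - C (r * μ + s)) ^ k * (X - C (r * ν + s)) ^ l := by
  have hdeg : k + l = Fintype.card n := by
    simpa [natDegree_mul, X_sub_C_ne_zero] using
      (congrArg natDegree hM).symm.trans M.charpoly_natDegree_eq_dim
  have hconst : C (r ^ Fintype.card n) * C r⁻¹ ^ k * C r⁻¹ ^ l = 1 := by
    rw [mul_assoc, ← pow_add, hdeg, ← map_pow, ← map_mul, ← mul_pow, mul_inv_cancel₀ hr, one_pow,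
      C_1]
  rw [charpoly_smul_add_scalar M hr, hM, mul_comp, pow_comp, pow_comp,
    X_sub_C_comp_C_inv_mul_X_sub_C hr, X_sub_C_comp_C_inv_mul_X_sub_C hr, mul_pow, mul_pow]
  linear_combination ((X - C (r * μ + s)) ^ k * (X - C (r * ν + s)) ^ l) * hconst

end Field

end Matrix

theorem IsSeidel.kronecker_of_const_one_sub_one_add_one {ι m : Type*} [DecidableEq ι]
    [DecidableEq m] {S : Matrix m m ℝ} (hS : IsSeidel S) :
    IsSeidel (Matrix.kroneckerMap (· * ·) (Matrix.of fun (_ _ : ι) => (1 : ℝ)) (S - 1) + 1) := by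
  obtain ⟨hsymm, hdiag, hoff⟩ := hS
  refine ⟨?_, ?_, ?_⟩
  · refine Matrix.IsSymm.add ?_ Matrix.isSymm_one
    rw [Matrix.IsSymm, ← Matrix.kroneckerMap_transpose, (hsymm.sub Matrix.isSymm_one).eq]
    rfl
  · rintro ⟨i, j⟩
    simp [hdiag j]
  · rintro ⟨i, j⟩ ⟨k, l⟩ hne
    by_cases hjl : j = l
    · subst hjl
      have hik : i ≠ k := fun h => hne (by rw [h])
      simp [hik, hdiag j]
    · simpa [Matrix.one_apply, hjl] using hoff j l hjl

theorem stmt_5_general (a b c : ℕ) (ha : 1 ≤ a)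
    (lam0 lam1 : ℝ)
    (S : Matrix (Fin b) (Fin b) ℝ) (hS : IsSeidel S)
    (hspec : S.charpoly = (X - C lam0) ^ (b - c) * (X - C lam1) ^ c) :
    IsSeidel (Matrix.kroneckerMap (· * ·)
        (Matrix.of fun (_ _ : Fin a) => (1 : ℝ)) (S - 1) + 1) ∧
    (Matrix.kroneckerMap (· * ·)
        (Matrix.of fun (_ _ : Fin a) => (1 : ℝ)) (S - 1) + 1).charpoly =
      (X - C ((a : ℝ) * (lam0 - 1) + 1)) ^ (b - c) * (X - C 1) ^ ((a - 1) * b) *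
        (X - C ((a : ℝ) * (lam1 - 1) + 1)) ^ c := by
  refine ⟨hS.kronecker_of_const_one_sub_one_add_one, ?_⟩
  have : Nonempty (Fin a) := ⟨⟨0, ha⟩⟩
  have ha₀ : (a : ℝ) ≠ 0 := by positivity
  have hshift : (a : ℝ) • (S - 1) + 1 = (a : ℝ) • S + Matrix.scalar (Fin b) (1 - (a : ℝ)) := by
    rw [smul_sub, Matrix.scalar_apply, ← Matrix.smul_one_eq_diagonal, sub_smul, one_smul]
    abel
  have hroot (μ : ℝ) : (a : ℝ) * μ + (1 - a) = a * (μ - 1) + 1 := by ring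
  rw [Matrix.charpoly_kronecker_of_const_one_add_one, Fintype.card_fin, Fintype.card_fin, hshift,
    Matrix.charpoly_smul_add_scalar_of_charpoly_eq hspec ha₀, hroot, hroot, C_1]
  ring

/-- Let `S` be a Seidel matrix of order `b ≥ 3` whose spectrum is
`{lam0 with multiplicity b−c, lam1 with multiplicity c}` for some `c ≥ 1`, with
`lam0 ≠ 1 ≠ lam1`.  Then for every `a ≥ 1` the matrix `S' := J_a ⊗ (S − I_b) + I_{ab}` is a
Seidel matrix of order `ab` whose spectrum is `{a(lam0−1)+1 with multiplicity b−c,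
1 with multiplicity (a−1)b, a(lam1−1)+1 with multiplicity c}`. -/
theorem stmt_5 (a b c : ℕ) (ha : 1 ≤ a) (hb : 3 ≤ b) (hc : 1 ≤ c) (hcb : c ≤ b)
    (lam0 lam1 : ℝ) (h0 : lam0 ≠ 1) (h1 : lam1 ≠ 1)
    (S : Matrix (Fin b) (Fin b) ℝ) (hS : IsSeidel S)
    (hspec : S.charpoly = (X - C lam0) ^ (b - c) * (X - C lam1) ^ c) :
    IsSeidel (Matrix.kroneckerMap (· * ·)
        (Matrix.of fun (_ _ : Fin a) => (1 : ℝ)) (S - 1) + 1) ∧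
    (Matrix.kroneckerMap (· * ·)
        (Matrix.of fun (_ _ : Fin a) => (1 : ℝ)) (S - 1) + 1).charpoly =
      (X - C ((a : ℝ) * (lam0 - 1) + 1)) ^ (b - c) * (X - C 1) ^ ((a - 1) * b) *
        (X - C ((a : ℝ) * (lam1 - 1) + 1)) ^ c :=
  stmt_5_general a b c ha lam0 lam1 S hS hspec
end

section
/- For integers a ≥ 2 and b ≥ 3, the matrix K(a,b) := J_a ⊗ (J_b − 2I_b) + I_{ab} is a Seidel matrix of order ab whose spectrum is {1−2a with multiplicity b−1, 1 with multiplicity ab−b, ab−2a+1 with multiplicity 1}; in particular K(a,b) has exactly three distinct eigenvalues, and consequently Seidel matrices of order n with exactly three distinct eigenvalues exist for every composite order n = ab with a ≥ 2 and b ≥ 3. -/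
open Polynomial

/-- The matrix `K(a,b) := J_a ⊗ (J_b − 2 I_b) + I_{ab}`. -/
def Kab (a b : ℕ) : Matrix (Fin a × Fin b) (Fin a × Fin b) ℝ :=
  Matrix.kroneckerMap (· * ·) (Matrix.of fun (_ _ : Fin a) => (1 : ℝ))
    ((Matrix.of fun (_ _ : Fin b) => (1 : ℝ)) - 2 • 1) + 1

/-!
Write `K(a,b) = J − 2E + I` with `J = J_a ⊗ J_b` and `E = J_a ⊗ I_b`. The relations `J² = ab J`,
`JE = EJ = a J` and `E² = a E` show that `K(a,b)` is annihilated by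
`(x − (1 − 2a))(x − 1)(x − (ab − 2a + 1))`, so, `K(a,b)` being symmetric, all its eigenvalues lie
among these three numbers. Their multiplicities are then forced by the traces of `K⁰, K¹, K²`,
namely `ab`, `0` and `ab(ab − 1)` (the last two hold for every Seidel matrix): the Vandermonde
system in three distinct values has only one solution.
-/

open Matrix Finset
open scoped Kronecker

@[to_additive]
lemma Finset.prod_comp_eq_prod_pow_card_fiber {ι κ M : Type*} [Fintype ι] [DecidableEq κ]
    [CommMonoid M] {g : ι → κ} {t : Finset κ} (h : ∀ i, g i ∈ t) (f : κ → M) :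
    ∏ i, f (g i) = ∏ c ∈ t, f c ^ #{i | g i = c} := by
  simp_rw [← prod_const]
  exact (prod_fiberwise_of_maps_to' (fun i _ => h i) f).symm

lemma Polynomial.card_roots_toFinset_prod_X_sub_C_pow {ι K : Type*} [Fintype ι] [Field K]
    [DecidableEq K] {c : ι → K} (hc : Function.Injective c) {m : ι → ℕ} (hm : ∀ i, m i ≠ 0) :
    (∏ i, (X - C (c i)) ^ m i).roots.toFinset.card = Fintype.card ι := by
  have hne : ∏ i, (X - C (c i)) ^ m i ≠ 0 :=
    prod_ne_zero_iff.mpr fun i _ => pow_ne_zero _ (X_sub_C_ne_zero _)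
  have : (∏ i, (X - C (c i)) ^ m i).roots.toFinset = univ.image c := by
    ext x
    simp [mem_roots hne, eval_prod, Finset.prod_eq_zero_iff, hm, sub_eq_zero, eq_comm (a := x)]
  rw [this, card_image_of_injective _ hc, card_univ]

namespace Matrix.IsHermitian

open Unitary
variable {𝕜 ι : Type*} [RCLike 𝕜] [Fintype ι] [DecidableEq ι] {A : Matrix ι ι 𝕜}

lemma aeval_eq_conj_diagonal (hA : A.IsHermitian) (p : 𝕜[X]) :
    aeval A p = conjStarAlgAut 𝕜 _ hA.eigenvectorUnitary
      (diagonal fun i => p.eval (hA.eigenvalues i : 𝕜)) := by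
  conv_lhs => rw [hA.spectral_theorem]
  rw [aeval_algHom_apply, ← diagonalAlgHom_apply (R := 𝕜), aeval_algHom_apply, aeval_pi_apply]
  simp

lemma trace_aeval (hA : A.IsHermitian) (p : 𝕜[X]) :
    (aeval A p).trace = ∑ i, p.eval (hA.eigenvalues i : 𝕜) := by
  rw [hA.aeval_eq_conj_diagonal, conjStarAlgAut_apply, trace_mul_cycle, coe_star_mul_self,
    one_mul, trace_diagonal]

lemma eval_eigenvalues_eq_zero (hA : A.IsHermitian) {p : 𝕜[X]} (hp : aeval A p = 0) (i : ι) :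
    p.eval (hA.eigenvalues i : 𝕜) = 0 := by
  rw [hA.aeval_eq_conj_diagonal, EmbeddingLike.map_eq_zero_iff] at hp
  simpa using congrFun₂ hp i i

theorem charpoly_eq_prod_pow_of_trace_pow {A : Matrix ι ι ℝ} (hA : A.IsHermitian) {n : ℕ}
    {c : Fin n → ℝ} (hc : Function.Injective c) (hAc : aeval A (∏ i, (X - C (c i))) = 0)
    {m : Fin n → ℕ} (htr : ∀ k < n, (A ^ k).trace = ∑ i, (m i : ℝ) * c i ^ k) :
    A.charpoly = ∏ i, (X - C (c i)) ^ m i := by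
  have hroot (j : ι) : ∃ i, hA.eigenvalues j = c i := by
    simpa [eval_prod, Finset.prod_eq_zero_iff, sub_eq_zero] using
      hA.eval_eigenvalues_eq_zero hAc j
  choose g hg using hroot
  have heig (f : ℝ → ℝ[X]) : ∏ j, f (hA.eigenvalues j) = ∏ i, f (c i) ^ #{j | g j = i} := by
    simp only [hg]
    exact prod_comp_eq_prod_pow_card_fiber (fun j => mem_univ (g j)) (f ∘ c)
  have hmult : ∀ i, #{j | g j = i} = m i := by
    suffices (fun i => (#{j | g j = i} : ℝ) - m i) = 0 by
      intro i; exact_mod_cast sub_eq_zero.mp (congrFun this i)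
    refine eq_zero_of_forall_pow_sum_mul_pow_eq_zero hc fun k => ?_
    have htrace := hA.trace_aeval (X ^ (k : ℕ))
    rw [aeval_X_pow, htr k k.isLt] at htrace
    simp only [eval_pow, eval_X, RCLike.ofReal_real_eq_id, id, hg,
      sum_comp_eq_sum_nsmul_card_fiber (fun j => mem_univ (g j)) (fun i => c i ^ (k : ℕ))] at htrace
    simp [sub_mul, htrace]
  rw [hA.charpoly_eq]
  simpa [hmult] using heig (fun x => X - C x)

end Matrix.IsHermitian

namespace IsSeidel
variable {ι κ : Type*} {S : Matrix ι ι ℝ}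

lemma isHermitian (hS : IsSeidel S) : S.IsHermitian := by
  rw [IsHermitian, conjTranspose_eq_transpose_of_trivial]
  exact hS.1

lemma trace_eq_zero [Fintype ι] (hS : IsSeidel S) : S.trace = 0 :=
  Finset.sum_eq_zero fun i _ => hS.2.1 i

lemma mul_self_apply [Fintype ι] [DecidableEq ι] (hS : IsSeidel S) (i : ι) :
    (S * S) i i = Fintype.card ι - 1 := by
  have hsq (j : ι) : S i j * S j i = if i = j then 0 else 1 := by
    rw [hS.1.apply i j]
    split_ifs with h
    · simp [h, hS.2.1]
    · rcases hS.2.2 i j h with h' | h' <;> simp [h']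
  simp [mul_apply, hsq, Finset.sum_ite, Finset.filter_ne,
    Nat.cast_pred (Fintype.card_pos_iff.mpr ⟨i⟩)]

lemma trace_mul_self [Fintype ι] [DecidableEq ι] (hS : IsSeidel S) :
    (S * S).trace = Fintype.card ι * (Fintype.card ι - 1) := by
  simp only [trace, Matrix.diag, hS.mul_self_apply, sum_const, card_univ, nsmul_eq_mul]

lemma reindex (hS : IsSeidel S) (e : ι ≃ κ) : IsSeidel (reindex e e S) := by
  refine ⟨?_, fun i => hS.2.1 _, fun i j hij => hS.2.2 _ _ (e.symm.injective.ne hij)⟩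
  ext i j
  exact hS.1.apply _ _

end IsSeidel

def allOnes (m : Type*) : Matrix m m ℝ := of fun _ _ => 1

lemma allOnes_mul_self {m : Type*} [Fintype m] :
    allOnes m * allOnes m = (Fintype.card m : ℝ) • allOnes m := by
  ext i j
  simp [allOnes, mul_apply]

section Kab
variable (a b : ℕ)

lemma Kab_apply (p q : Fin a × Fin b) :
    Kab a b p q = (if p.2 = q.2 then -1 else 1) + if p = q then 1 else 0 := by
  rcases p with ⟨i, j⟩
  rcases q with ⟨k, l⟩
  simp only [Kab, Matrix.add_apply, kroneckerMap_apply, of_apply, one_mul, Matrix.sub_apply,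
    Matrix.smul_apply, one_apply, Prod.ext_iff]
  split_ifs <;> norm_num

lemma Kab_eq_kronecker :
    Kab a b = allOnes (Fin a) ⊗ₖ allOnes (Fin b) - (2 : ℝ) • (allOnes (Fin a) ⊗ₖ 1) + 1 := by
  ext ⟨i, j⟩ ⟨k, l⟩
  simp [Kab, allOnes, mul_sub, ofNat_apply, one_apply]

lemma isSeidel_Kab : IsSeidel (Kab a b) := by
  refine ⟨?_, fun p => by simp [Kab_apply], fun p q hpq => ?_⟩
  · ext p q
    simp [Kab_apply, eq_comm]
  · by_cases h : p.2 = q.2 <;> simp [Kab_apply, h, hpq]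

def kabEigenvalues : Fin 3 → ℝ := ![1 - 2 * a, 1, a * b - 2 * a + 1]

def kabMultiplicities : Fin 3 → ℕ := ![b - 1, a * b - b, 1]

lemma aeval_Kab_prod_X_sub_C_kabEigenvalues :
    aeval (Kab a b) (∏ i, (X - C (kabEigenvalues a b i))) = 0 := by
  rw [Kab_eq_kronecker]
  set J := allOnes (Fin a) ⊗ₖ allOnes (Fin b)
  set E := allOnes (Fin a) ⊗ₖ (1 : Matrix (Fin b) (Fin b) ℝ)
  have hJJ : J * J = ((a : ℝ) * b) • J := by
    simp [J, ← mul_kronecker_mul, allOnes_mul_self, smul_kronecker, kronecker_smul, smul_smul,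
      mul_comm]
  have hJE : J * E = (a : ℝ) • J := by
    simp [J, E, ← mul_kronecker_mul, allOnes_mul_self, smul_kronecker]
  have hEJ : E * J = (a : ℝ) • J := by
    simp [J, E, ← mul_kronecker_mul, allOnes_mul_self, smul_kronecker]
  have hEE : E * E = (a : ℝ) • E := by
    simp [E, ← mul_kronecker_mul, allOnes_mul_self, smul_kronecker]
  simp only [Fin.prod_univ_three, map_mul, map_sub, aeval_X, aeval_C, kabEigenvalues,
    Matrix.cons_val, Algebra.algebraMap_eq_smul_one]
  simp only [mul_sub, sub_mul, mul_add, add_mul, smul_mul_assoc, mul_smul_comm, one_mul,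
    mul_one, hJJ, hJE, hEJ, hEE, smul_smul]
  module

lemma kabEigenvalues_injective (ha : 0 < a) (hb₀ : 0 < b) (hb : b ≠ 2) :
    Function.Injective (kabEigenvalues a b) := by
  have ha' : (a : ℝ) ≠ 0 := by positivity
  have hb₀' : (b : ℝ) ≠ 0 := by positivity
  have hb' : (b : ℝ) - 2 ≠ 0 := sub_ne_zero.mpr (by exact_mod_cast hb)
  have h12 : (1 - 2 * a : ℝ) ≠ 1 := fun h => ha' (by linear_combination -h / 2)
  have h13 : (1 - 2 * a : ℝ) ≠ a * b - 2 * a + 1 :=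
    fun h => mul_ne_zero ha' hb₀' (by linear_combination -h)
  have h23 : (1 : ℝ) ≠ a * b - 2 * a + 1 := fun h => mul_ne_zero ha' hb' (by linear_combination -h)
  intro i j h
  fin_cases i <;> fin_cases j <;> simp_all [kabEigenvalues, eq_comm]

lemma charpoly_Kab_eq_prod (ha : 0 < a) (hb₀ : 0 < b) (hb : b ≠ 2) :
    (Kab a b).charpoly = ∏ i, (X - C (kabEigenvalues a b i)) ^ kabMultiplicities a b i := by
  have hS := isSeidel_Kab a b
  refine hS.isHermitian.charpoly_eq_prod_pow_of_trace_pow (kabEigenvalues_injective a b ha hb₀ hb)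
    (aeval_Kab_prod_X_sub_C_kabEigenvalues a b) fun k hk => ?_
  have hab : b ≤ a * b := Nat.le_mul_of_pos_left b ha
  simp only [Fin.sum_univ_three, kabEigenvalues, kabMultiplicities, Matrix.cons_val,
    Nat.cast_sub hb₀, Nat.cast_sub hab, Nat.cast_mul]
  interval_cases k
  · simp
  · rw [pow_one, hS.trace_eq_zero]
    ring
  · rw [sq, hS.trace_mul_self]
    simp only [Fintype.card_prod, Fintype.card_fin, Nat.cast_mul]
    ring

lemma charpoly_Kab (ha : 0 < a) (hb₀ : 0 < b) (hb : b ≠ 2) :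
    (Kab a b).charpoly =
      (X - C (1 - 2 * (a : ℝ))) ^ (b - 1) * (X - C 1) ^ (a * b - b) *
        (X - C ((a : ℝ) * b - 2 * a + 1)) ^ 1 := by
  rw [charpoly_Kab_eq_prod a b ha hb₀ hb, Fin.prod_univ_three]
  rfl

lemma card_roots_charpoly_Kab (ha : 2 ≤ a) (hb : 3 ≤ b) :
    (Kab a b).charpoly.roots.toFinset.card = 3 := by
  have hmult : ∀ i, kabMultiplicities a b i ≠ 0 := by
    have : b < a * b := by nlinarith
    intro i
    fin_cases i <;> simp [kabMultiplicities] <;> omega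
  rw [charpoly_Kab_eq_prod a b (by omega) (by omega) (by omega),
    card_roots_toFinset_prod_X_sub_C_pow (kabEigenvalues_injective a b (by omega) (by omega)
      (by omega)) hmult, Fintype.card_fin]

end Kab

/-- For integers `a ≥ 2`, `b ≥ 3`, the matrix `K(a,b)` is a Seidel matrix of
order `ab` with spectrum `{1−2a with multiplicity b−1, 1 with multiplicity ab−b,
ab−2a+1 with multiplicity 1}`; in particular it has exactly three distinct eigenvalues, and
consequently Seidel matrices of order `n` with exactly three distinct eigenvalues exist for
every composite order `n = ab` with `a ≥ 2`, `b ≥ 3`. -/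
theorem stmt_6 :
    (∀ a b : ℕ, 2 ≤ a → 3 ≤ b →
      IsSeidel (Kab a b) ∧
      (Kab a b).charpoly =
        (X - C (1 - 2 * (a : ℝ))) ^ (b - 1) * (X - C 1) ^ (a * b - b) *
          (X - C ((a : ℝ) * b - 2 * a + 1)) ^ 1 ∧
      (Kab a b).charpoly.roots.toFinset.card = 3) ∧
    (∀ n a b : ℕ, 2 ≤ a → 3 ≤ b → n = a * b →
      ∃ S : Matrix (Fin n) (Fin n) ℝ, IsSeidel S ∧
        S.charpoly.roots.toFinset.card = 3) := by
  refine ⟨fun a b ha hb => ⟨isSeidel_Kab a b, charpoly_Kab a b (by omega) (by omega) (by omega),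
    card_roots_charpoly_Kab a b ha hb⟩, ?_⟩
  rintro n a b ha hb rfl
  refine ⟨reindex finProdFinEquiv finProdFinEquiv (Kab a b), (isSeidel_Kab a b).reindex _, ?_⟩
  rw [charpoly_reindex]
  exact card_roots_charpoly_Kab a b ha hb
end

section
/- Let n ≥ 1 and let 𝒮 be a set of Seidel matrices of order n containing exactly one representative of every equivalence class of Seidel matrices of order n. Then Σ_{S ∈ 𝒮} 1/|Aut(S)| = 2^{n(n−3)/2} / n!. -/
open Polynomial Matrix

/-!
The signed permutation matrices form a group `G` of order `n! 2ⁿ` acting on the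
`2^(n choose 2)` Seidel matrices of order `n` by `S ↦ P S Pᵀ = P S P⁻¹`. The set `𝒮` is a
transversal of the orbits and `Aut S` is the stabilizer of `S`, so by orbit–stabilizer
`∑ 1/|Aut S| = ∑ |G • S| / |G| = 2^(n choose 2) / (n! 2ⁿ)`, and `(n choose 2) - n = n(n-3)/2`.
-/

open ConjAct MulAction

namespace MulAction

variable {G α : Type*} [Group G] [MulAction G α] {X : Set α}

theorem orbit_subset_of_forall_smul_mem (hX : ∀ g : G, ∀ x ∈ X, g • x ∈ X) {x : α}
    (hx : x ∈ X) : orbit G x ⊆ X := by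
  rintro _ ⟨g, rfl⟩
  exact hX g x hx

theorem ncard_eq_sum_ncard_orbit {𝒮 : Finset α} (hfin : X.Finite)
    (hX : ∀ g : G, ∀ x ∈ X, g • x ∈ X) (h𝒮 : ↑𝒮 ⊆ X)
    (hrep : ∀ x ∈ X, ∃! T, T ∈ 𝒮 ∧ T ∈ orbit G x) :
    X.ncard = ∑ T ∈ 𝒮, (orbit G T).ncard := by
  have horbit : ∀ T ∈ 𝒮, orbit G T ⊆ X := fun T hT ↦
    orbit_subset_of_forall_smul_mem hX (h𝒮 hT)
  have hunion : X = ⋃ T ∈ (𝒮 : Set α), orbit G T := by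
    refine subset_antisymm (fun x hx ↦ ?_) (Set.iUnion₂_subset horbit)
    obtain ⟨T, ⟨hT, hxT⟩, -⟩ := hrep x hx
    exact Set.mem_biUnion hT (mem_orbit_symm.1 hxT)
  have hdisj : (𝒮 : Set α).PairwiseDisjoint (orbit G) := by
    intro T hT T' hT' hne
    refine Set.disjoint_left.2 fun x hx hx' ↦ hne ?_
    exact (hrep x (horbit T hT hx)).unique ⟨hT, mem_orbit_symm.1 hx⟩ ⟨hT', mem_orbit_symm.1 hx'⟩
  rw [hunion, 𝒮.finite_toSet.ncard_biUnion (fun T hT ↦ hfin.subset (horbit T hT)) hdisj,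
    finsum_mem_coe_finset]

theorem sum_one_div_card_stabilizer {𝒮 : Finset α} (hfin : X.Finite)
    (hX : ∀ g : G, ∀ x ∈ X, g • x ∈ X) (h𝒮 : ↑𝒮 ⊆ X)
    (hrep : ∀ x ∈ X, ∃! T, T ∈ 𝒮 ∧ T ∈ orbit G x) :
    ∑ T ∈ 𝒮, (1 : ℝ) / Nat.card (stabilizer G T) = X.ncard / Nat.card G := by
  rw [ncard_eq_sum_ncard_orbit hfin hX h𝒮 hrep, Nat.cast_sum, Finset.sum_div]
  refine Finset.sum_congr rfl fun T hT ↦ ?_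
  have horbit : (orbit G T).ncard ≠ 0 :=
    ((Set.ncard_pos (hfin.subset (orbit_subset_of_forall_smul_mem hX (h𝒮 hT)))).2
      (nonempty_orbit T)).ne'
  rw [← (stabilizer G T).card_mul_index, index_stabilizer, Nat.cast_mul,
    div_mul_cancel_right₀ (Nat.cast_ne_zero.2 horbit), one_div]

end MulAction

section SignedPerm

variable {m : Type*} [Fintype m] [DecidableEq m] {P Q S : Matrix m m ℝ}

theorem signedPerm_mul_apply {σ : Equiv.Perm m} {ε : m → ℝ}
    (hP : ∀ i j, P i j = if i = σ j then ε j else 0) (A : Matrix m m ℝ) (i j : m) :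
    (P * A) (σ i) j = ε i * A i j := by
  rw [mul_apply, Finset.sum_eq_single i (fun k _ hk ↦ by simp [hP, Ne.symm hk]) (by simp)]
  simp [hP]

theorem signedPerm_conj_apply {σ : Equiv.Perm m} {ε : m → ℝ}
    (hP : ∀ i j, P i j = if i = σ j then ε j else 0) (A : Matrix m m ℝ) (i j : m) :
    (P * A * Pᵀ) (σ i) (σ j) = ε i * A i j * ε j := by
  rw [Matrix.mul_assoc, signedPerm_mul_apply hP, ← transpose_apply (A * Pᵀ),
    transpose_mul, transpose_transpose, signedPerm_mul_apply hP, transpose_apply]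
  ring

namespace IsSignedPerm

theorem one_s18 : IsSignedPerm (1 : Matrix m m ℝ) :=
  ⟨1, 1, fun _ ↦ Or.inl rfl, fun i j ↦ by rw [one_apply]; congr⟩

theorem mul_s18 (hP : IsSignedPerm P) (hQ : IsSignedPerm Q) : IsSignedPerm (P * Q) := by
  obtain ⟨σ, ε, hε, hP⟩ := hP
  obtain ⟨τ, δ, hδ, hQ⟩ := hQ
  refine ⟨σ * τ, fun j ↦ ε (τ j) * δ j, fun j ↦ ?_, fun i j ↦ ?_⟩
  · rcases hε (τ j) with h | h <;> rcases hδ j with h' | h' <;> simp [h, h']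
  · obtain ⟨i, rfl⟩ := σ.surjective i
    rw [signedPerm_mul_apply hP, hQ]
    by_cases h : i = τ j <;> simp [h]

theorem transpose_s18 (hP : IsSignedPerm P) : IsSignedPerm Pᵀ := by
  obtain ⟨σ, ε, hε, hP⟩ := hP
  refine ⟨σ⁻¹, fun j ↦ ε (σ⁻¹ j), fun j ↦ hε _, fun i j ↦ ?_⟩
  rw [transpose_apply, hP]
  by_cases h : j = σ i
  · simp [h]
  · rw [if_neg h, if_neg (by rintro rfl; simp at h)]

theorem mul_transpose_self_s18 (hP : IsSignedPerm P) : P * Pᵀ = 1 := by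
  obtain ⟨σ, ε, hε, hP⟩ := hP
  ext i j
  obtain ⟨i, rfl⟩ := σ.surjective i
  obtain ⟨j, rfl⟩ := σ.surjective j
  rw [← Matrix.one_mul Pᵀ, ← Matrix.mul_assoc, signedPerm_conj_apply hP]
  by_cases h : i = j
  · subst h; rcases hε i with h | h <;> simp [h]
  · simp [one_apply, h]

theorem transpose_mul_self (hP : IsSignedPerm P) : Pᵀ * P = 1 :=
  mul_eq_one_comm.1 hP.mul_transpose_self_s18

end IsSignedPerm

theorem IsSeidel.conj (hS : IsSeidel S) (hP : IsSignedPerm P) : IsSeidel (P * S * Pᵀ) := by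
  obtain ⟨hsymm, hdiag, hoff⟩ := hS
  obtain ⟨σ, ε, hε, hP⟩ := hP
  refine ⟨?_, fun i ↦ ?_, fun i j hij ↦ ?_⟩
  · rw [IsSymm, transpose_mul, transpose_mul, transpose_transpose, hsymm.eq, Matrix.mul_assoc]
  · obtain ⟨i, rfl⟩ := σ.surjective i
    rw [signedPerm_conj_apply hP, hdiag, mul_zero, zero_mul]
  · obtain ⟨i, rfl⟩ := σ.surjective i
    obtain ⟨j, rfl⟩ := σ.surjective j
    rw [signedPerm_conj_apply hP]
    rcases hoff i j (σ.injective.ne_iff.1 hij) with h | h <;> rcases hε i with hi | hi <;>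
      rcases hε j with hj | hj <;> simp [h, hi, hj]

end SignedPerm

theorem Int.units_cast_eq_one_or (u : ℤˣ) : ((u : ℤ) : ℝ) = 1 ∨ ((u : ℤ) : ℝ) = -1 := by
  rcases Int.units_eq_one_or u with rfl | rfl <;> simp

theorem Int.exists_units_cast_eq {x : ℝ} (hx : x = 1 ∨ x = -1) :
    ∃ u : ℤˣ, ((u : ℤ) : ℝ) = x := by
  rcases hx with rfl | rfl
  exacts [⟨1, by simp⟩, ⟨-1, by simp⟩]

section Counting

variable {m : Type*} [DecidableEq m]

def signedPermMatrix (σ : Equiv.Perm m) (ε : m → ℤˣ) : Matrix m m ℝ :=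
  of fun i j ↦ if i = σ j then ((ε j : ℤ) : ℝ) else 0

theorem signedPermMatrix_injective :
    Function.Injective fun p : Equiv.Perm m × (m → ℤˣ) ↦ signedPermMatrix p.1 p.2 := by
  rintro ⟨σ, ε⟩ ⟨τ, δ⟩ h
  have hentry (j : m) :
      ((ε j : ℤ) : ℝ) = if σ j = τ j then ((δ j : ℤ) : ℝ) else 0 := by
    simpa [signedPermMatrix] using congrFun (congrFun h (σ j)) j
  obtain rfl : σ = τ := Equiv.ext fun j ↦ by
    by_contra hne
    simpa [hne] using hentry j
  exact Prod.ext rfl (funext fun j ↦ Units.val_injective (by simpa using hentry j))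

def seidelOfSigns (f : {z : Sym2 m // ¬z.IsDiag} → ℤˣ) : Matrix m m ℝ :=
  of fun i j ↦ if h : i = j then 0 else ((f ⟨s(i, j), Sym2.mk_isDiag_iff.not.2 h⟩ : ℤ) : ℝ)

theorem isSeidel_seidelOfSigns (f : {z : Sym2 m // ¬z.IsDiag} → ℤˣ) :
    IsSeidel (seidelOfSigns f) := by
  refine ⟨?_, fun i ↦ by simp [seidelOfSigns], fun i j hij ↦ ?_⟩
  · ext i j
    by_cases h : i = j
    · subst h; rfl
    · simp [seidelOfSigns, h, Ne.symm h, Sym2.eq_swap]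
  · simpa [seidelOfSigns, hij] using Int.units_cast_eq_one_or _

theorem seidelOfSigns_injective : Function.Injective (seidelOfSigns (m := m)) := by
  intro f g h
  funext ⟨z, hz⟩
  induction z using Sym2.ind with
  | _ i j =>
    have hij : i ≠ j := Sym2.mk_isDiag_iff.not.1 hz
    have := congrFun (congrFun h i) j
    simp only [seidelOfSigns, of_apply, dif_neg hij, Int.cast_inj] at this
    exact Units.val_injective this

theorem exists_seidelOfSigns_eq {S : Matrix m m ℝ} (hS : IsSeidel S) :
    ∃ f, seidelOfSigns f = S := by
  obtain ⟨hsymm, hdiag, hoff⟩ := hS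
  let sign : {g : m → m → ℤˣ // ∀ i j, g i j = g j i} :=
    ⟨fun i j ↦ if S i j = 1 then 1 else -1, fun i j ↦ by
      show (if S i j = 1 then (1 : ℤˣ) else -1) = if S j i = 1 then 1 else -1
      rw [hsymm.apply]⟩
  refine ⟨fun z ↦ Sym2.lift sign z.1, ?_⟩
  ext i j
  by_cases h : i = j
  · subst h; simp [seidelOfSigns, hdiag]
  · have hne : (-1 : ℝ) ≠ 1 := by norm_num
    rcases hoff i j h with h' | h' <;> simp [seidelOfSigns, sign, h, h', hne]

variable [Fintype m]

theorem isSignedPerm_iff_exists_eq_signedPermMatrix {P : Matrix m m ℝ} :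
    IsSignedPerm P ↔ ∃ σ ε, signedPermMatrix σ ε = P := by
  constructor
  · rintro ⟨σ, ε, hε, hP⟩
    choose δ hδ using fun j ↦ Int.exists_units_cast_eq (hε j)
    exact ⟨σ, δ, by ext i j; simp [signedPermMatrix, hP, hδ]⟩
  · rintro ⟨σ, ε, rfl⟩
    exact ⟨σ, fun j ↦ ((ε j : ℤ) : ℝ), fun j ↦ Int.units_cast_eq_one_or _, fun _ _ ↦ rfl⟩

theorem card_isSignedPerm :
    Nat.card {P : Matrix m m ℝ // IsSignedPerm P} =
      (Fintype.card m).factorial * 2 ^ Fintype.card m := by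
  have e : Equiv.Perm m × (m → ℤˣ) ≃ {P : Matrix m m ℝ // IsSignedPerm P} :=
    Equiv.ofBijective (fun p ↦ ⟨signedPermMatrix p.1 p.2,
        isSignedPerm_iff_exists_eq_signedPermMatrix.2 ⟨_, _, rfl⟩⟩)
      ⟨fun p q h ↦ signedPermMatrix_injective (congrArg Subtype.val h), fun ⟨P, hP⟩ ↦ by
        obtain ⟨σ, ε, rfl⟩ := isSignedPerm_iff_exists_eq_signedPermMatrix.1 hP
        exact ⟨(σ, ε), rfl⟩⟩
  rw [← Nat.card_congr e]
  simp [Fintype.card_perm, Fintype.card_units_int]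

theorem card_isSeidel :
    Nat.card {S : Matrix m m ℝ // IsSeidel S} = 2 ^ (Fintype.card m).choose 2 := by
  have e : ({z : Sym2 m // ¬z.IsDiag} → ℤˣ) ≃ {S : Matrix m m ℝ // IsSeidel S} :=
    Equiv.ofBijective (fun f ↦ ⟨seidelOfSigns f, isSeidel_seidelOfSigns f⟩)
      ⟨fun f g h ↦ seidelOfSigns_injective (congrArg Subtype.val h), fun ⟨S, hS⟩ ↦ by
        obtain ⟨f, rfl⟩ := exists_seidelOfSigns_eq hS
        exact ⟨f, rfl⟩⟩
  rw [← Nat.card_congr e]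
  simp only [Nat.card_eq_fintype_card, Fintype.card_fun, Fintype.card_units_int,
    Sym2.card_subtype_not_diag]

end Counting

section SignedPermGroup

variable (m : Type*) [Fintype m] [DecidableEq m]

/-- Taken inside `ConjAct` of the units of the matrix ring, so that Mathlib's conjugation action
gives `g • S = P S P⁻¹`, which is `P S Pᵀ` for a signed permutation matrix `P`. -/
def signedPermGroup : Subgroup (ConjAct (Matrix m m ℝ)ˣ) where
  carrier := {g | IsSignedPerm (ofConjAct g).val}
  mul_mem' hg hh := by simpa using hg.mul_s18 hh
  one_mem' := by simpa using IsSignedPerm.one_s18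
  inv_mem' {g} hg := by
    rw [Set.mem_ofPred_eq, ofConjAct_inv,
      Units.inv_eq_of_mul_eq_one_right (IsSignedPerm.mul_transpose_self_s18 hg)]
    exact IsSignedPerm.transpose_s18 hg

variable {m}

theorem mem_signedPermGroup_iff {g : ConjAct (Matrix m m ℝ)ˣ} :
    g ∈ signedPermGroup m ↔ IsSignedPerm (ofConjAct g).val :=
  Iff.rfl

theorem signedPermGroup_smul_def (g : signedPermGroup m) (S : Matrix m m ℝ) :
    g • S = (ofConjAct g.1).val * S * (ofConjAct g.1).valᵀ := by
  rw [Subgroup.smul_def, units_smul_def, Units.inv_eq_of_mul_eq_one_right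
    (mem_signedPermGroup_iff.1 g.2).mul_transpose_self_s18]

def signedPermGroupEquiv : signedPermGroup m ≃ {P : Matrix m m ℝ // IsSignedPerm P} where
  toFun g := ⟨(ofConjAct g.1).val, g.2⟩
  invFun P := ⟨toConjAct ⟨P, Pᵀ, P.2.mul_transpose_self_s18, P.2.transpose_mul_self⟩, P.2⟩
  left_inv _ := Subtype.ext <| ofConjAct.injective <| Units.ext rfl
  right_inv _ := rfl

theorem card_signedPermGroup :
    Nat.card (signedPermGroup m) = (Fintype.card m).factorial * 2 ^ Fintype.card m :=
  (Nat.card_congr signedPermGroupEquiv).trans card_isSignedPerm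

theorem card_stabilizer_signedPermGroup (S : Matrix m m ℝ) :
    Nat.card (stabilizer (signedPermGroup m) S) =
      Nat.card {P : Matrix m m ℝ // IsSignedPerm P ∧ P * S * Pᵀ = S} :=
  Nat.card_congr <| (signedPermGroupEquiv.subtypeEquiv fun g ↦ by
      rw [mem_stabilizer_iff, signedPermGroup_smul_def]; rfl).trans
    (Equiv.subtypeSubtypeEquivSubtypeInter _ _)

theorem mem_orbit_signedPermGroup_iff {S T : Matrix m m ℝ} :
    T ∈ orbit (signedPermGroup m) S ↔ SeidelEquiv S T := by
  constructor
  · rintro ⟨g, rfl⟩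
    exact ⟨_, mem_signedPermGroup_iff.1 g.2, signedPermGroup_smul_def g S⟩
  · rintro ⟨P, hP, rfl⟩
    exact ⟨signedPermGroupEquiv.symm ⟨P, hP⟩, signedPermGroup_smul_def _ S⟩

theorem IsSeidel.signedPermGroup_smul {S : Matrix m m ℝ} (hS : IsSeidel S)
    (g : signedPermGroup m) : IsSeidel (g • S) := by
  rw [signedPermGroup_smul_def]
  exact hS.conj (mem_signedPermGroup_iff.1 g.2)

end SignedPermGroup

theorem mul_sub_three_div_two_eq_choose_two_sub (n : ℕ) :
    (n : ℤ) * (n - 3) / 2 = n.choose 2 - n := by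
  have hchoose : 2 * (n.choose 2 : ℤ) = n * (n - 1) := by
    have : 2 * (n.choose 2 : ℚ) = n * (n - 1) := by rw [Nat.cast_choose_two]; ring
    exact_mod_cast this
  rw [show (n : ℤ) * (n - 3) = 2 * (n.choose 2 - n) by linear_combination -hchoose,
    Int.mul_ediv_cancel_left _ two_ne_zero]

theorem stmt_18_general (n : ℕ) (𝒮 : Finset (Matrix (Fin n) (Fin n) ℝ))
    (hSeidel : ∀ S ∈ 𝒮, IsSeidel S)
    (hrep : ∀ S : Matrix (Fin n) (Fin n) ℝ, IsSeidel S →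
      ∃! T, T ∈ 𝒮 ∧ SeidelEquiv S T) :
    ∑ S ∈ 𝒮, (1 : ℝ) /
        (Nat.card {P : Matrix (Fin n) (Fin n) ℝ // IsSignedPerm P ∧ P * S * Pᵀ = S}) =
      (2 : ℝ) ^ (((n : ℤ) * ((n : ℤ) - 3)) / 2) / (n.factorial : ℝ) := by
  have hcard : {S : Matrix (Fin n) (Fin n) ℝ | IsSeidel S}.ncard = 2 ^ n.choose 2 := by
    rw [← Nat.card_coe_set_eq, Set.coe_ofPred, card_isSeidel, Fintype.card_fin]
  have hsum := sum_one_div_card_stabilizer (G := signedPermGroup (Fin n)) (𝒮 := 𝒮)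
    (X := {S | IsSeidel S}) (Set.finite_of_ncard_ne_zero (by simp [hcard]))
    (fun g S hS ↦ hS.signedPermGroup_smul g) hSeidel
    fun S hS ↦ by simpa only [mem_orbit_signedPermGroup_iff] using hrep S hS
  simp only [card_stabilizer_signedPermGroup] at hsum
  rw [hsum, hcard, card_signedPermGroup, Fintype.card_fin,
    mul_sub_three_div_two_eq_choose_two_sub, zpow_sub₀ two_ne_zero, zpow_natCast, zpow_natCast]
  field_simp
  push_cast
  ring

/-- If `𝒮` is a set of Seidel matrices of order `n ≥ 1` containing exactly
one representative of every equivalence class of Seidel matrices of order `n`, then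
`Σ_{S ∈ 𝒮} 1/|Aut(S)| = 2^{n(n−3)/2} / n!`, where `Aut S` is the group of signed permutation
matrices `P` with `P S Pᵀ = S`. -/
theorem stmt_18 (n : ℕ) (hn : 1 ≤ n) (𝒮 : Finset (Matrix (Fin n) (Fin n) ℝ))
    (hSeidel : ∀ S ∈ 𝒮, IsSeidel S)
    (hrep : ∀ S : Matrix (Fin n) (Fin n) ℝ, IsSeidel S →
      ∃! T, T ∈ 𝒮 ∧ SeidelEquiv S T) :
    ∑ S ∈ 𝒮, (1 : ℝ) /
        (Nat.card {P : Matrix (Fin n) (Fin n) ℝ // IsSignedPerm P ∧ P * S * Pᵀ = S}) =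
      (2 : ℝ) ^ (((n : ℤ) * ((n : ℤ) - 3)) / 2) / (n.factorial : ℝ) :=
  stmt_18_general n 𝒮 hSeidel hrep
end
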